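/- arXiv:2011.13674 — 2 statements merged into one kernel-verified Lean document; each statement's English description precedes it below -/
import Mathlib

section
/- Let V be a real vector space of finite odd dimension n and let f : V → V be a linear map. Then for every natural number d with d < n there exists an f-invariant subspace of V of dimension d. -/
/-!
Over `ℝ` every endomorphism `f` of a nonzero space has an invariant subspace `U` of
dimension 1 or 2 (take `v` killed by an irreducible factor `q` of the minimal polynomial; as
`deg q ≤ 2`, the span of `v` and `f v` is invariant), and, in odd dimension, an eigenvector
(the characteristic polynomial has odd degree) as well as an invariant hyperplane (the kernel of
an eigenvector of the dual map). Passing to `V ⧸ U` or to an invariant subspace, one shows by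
strong induction on `n = dim V` that there is an invariant subspace of every dimension `d ≤ n`
with `d` even or `n` odd:
* `n` even, `d` even: quotient by `U`, leaving `n - 1` odd or `d - 2` even;
* `n` odd, `d` odd: quotient by an eigenline, leaving `d - 1` even;
* `n` odd, `d` even: restrict to an invariant hyperplane, keeping `d` even.
-/

open Polynomial Module Module.End

section
variable {K V : Type*} [Field K] [AddCommGroup V] [Module K V]

theorem Submodule.finrank_comap_mkQ [FiniteDimensional K V] (U : Submodule K V)
    (W : Submodule K (V ⧸ U)) :
    finrank K (W.comap U.mkQ) = finrank K W + finrank K U := by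
  have hU : U ≤ W.comap U.mkQ := by
    simpa only [Submodule.ker_mkQ] using LinearMap.ker_le_comap U.mkQ (p := W)
  have hquot := (U.quotientQuotientEquivQuotient _ hU).finrank_eq
  rw [Submodule.map_comap_eq_of_surjective U.mkQ_surjective] at hquot
  have := (W.comap U.mkQ).finrank_quotient_add_finrank
  have := W.finrank_quotient_add_finrank
  have := U.finrank_quotient_add_finrank
  omega

theorem finrank_span_pair_eq_one_or_two [FiniteDimensional K V] {v : V} (w : V) (hv : v ≠ 0) :
    finrank K (Submodule.span K {v, w}) = 1 ∨ finrank K (Submodule.span K {v, w}) = 2 := by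
  have hle : finrank K (Submodule.span K {v, w}) ≤ 2 := by
    classical
    refine (finrank_span_le_card ({v, w} : Set V)).trans ?_
    simpa using Finset.card_le_two
  have hge : finrank K (K ∙ v) ≤ finrank K (Submodule.span K {v, w}) :=
    Submodule.finrank_mono (Submodule.span_mono (by simp))
  rw [finrank_span_singleton hv] at hge
  omega

namespace Module.End

theorem comap_mkQ_mem_invtSubmodule {f : End K V} {U : Submodule K V}
    (hU : U ∈ f.invtSubmodule) {W : Submodule K (V ⧸ U)}
    (hW : W ∈ invtSubmodule (U.mapQ U f hU)) : W.comap U.mkQ ∈ f.invtSubmodule :=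
  fun _ hx ↦ hW hx

theorem exists_finrank_eq_of_quotient [FiniteDimensional K V] {f : End K V}
    {U : Submodule K V} (hU : U ∈ f.invtSubmodule) {d : ℕ} (hUd : finrank K U ≤ d)
    (h : ∃ W ∈ invtSubmodule (U.mapQ U f hU), finrank K W = d - finrank K U) :
    ∃ W ∈ f.invtSubmodule, finrank K W = d := by
  obtain ⟨W, hW, hWd⟩ := h
  exact ⟨_, comap_mkQ_mem_invtSubmodule hU hW, by rw [Submodule.finrank_comap_mkQ]; omega⟩

theorem exists_finrank_eq_of_restrict {f : End K V} {U : Submodule K V}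
    (hU : U ∈ f.invtSubmodule) {d : ℕ}
    (h : ∃ W ∈ invtSubmodule (f.restrict hU), finrank K W = d) :
    ∃ W ∈ f.invtSubmodule, finrank K W = d := by
  obtain ⟨W, hW, hWd⟩ := h
  exact ⟨_, invtSubmodule.map_subtype_mem_of_mem_invtSubmodule f hU hW,
    by rwa [Submodule.finrank_map_subtype_eq]⟩

theorem span_singleton_mem_invtSubmodule {f : End K V} {μ : K} {v : V}
    (hv : f.HasEigenvector μ v) : K ∙ v ∈ f.invtSubmodule := by
  intro x hx
  obtain ⟨a, rfl⟩ := Submodule.mem_span_singleton.1 hx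
  rw [Submodule.mem_comap, map_smul, hv.apply_eq_smul, smul_smul]
  exact Submodule.smul_mem _ _ (Submodule.mem_span_singleton_self v)

theorem ker_mem_invtSubmodule_of_dualMap_eq_smul {f : End K V} {μ : K} {φ : Dual K V}
    (hφ : f.dualMap φ = μ • φ) : LinearMap.ker φ ∈ f.invtSubmodule := by
  intro x hx
  rw [Submodule.mem_comap, LinearMap.mem_ker, ← LinearMap.dualMap_apply, hφ,
    LinearMap.smul_apply, LinearMap.mem_ker.1 hx, smul_zero]

theorem span_pair_mem_invtSubmodule {f : End K V} {v : V}
    (h : f (f v) ∈ Submodule.span K {v, f v}) :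
    Submodule.span K {v, f v} ∈ f.invtSubmodule := by
  rw [mem_invtSubmodule_iff_map_le, Submodule.map_span, Set.image_pair, Submodule.span_le,
    Set.insert_subset_iff, Set.singleton_subset_iff]
  exact ⟨Submodule.subset_span (by simp), h⟩

theorem apply_apply_mem_span_pair_of_aeval_eq_zero {f : End K V} {p : K[X]}
    (hp : p.natDegree = 2) {v : V} (hv : aeval f p v = 0) :
    f (f v) ∈ Submodule.span K {v, f v} := by
  have hp2 : p.coeff 2 ≠ 0 := by
    rw [← hp]
    exact leadingCoeff_ne_zero.2 (ne_zero_of_natDegree_gt (hp ▸ two_pos))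
  rw [aeval_eq_sum_range, hp] at hv
  simp only [Finset.sum_range_succ, Finset.sum_range_zero, zero_add, pow_zero, pow_one, sq,
    LinearMap.add_apply, LinearMap.smul_apply, mul_apply, one_apply] at hv
  rw [← one_smul K (f (f v)), ← inv_mul_cancel₀ hp2, ← smul_smul,
    eq_neg_of_add_eq_zero_right hv]
  exact Submodule.smul_mem _ _ <| Submodule.neg_mem _ <| Submodule.add_mem _
    (Submodule.smul_mem _ _ (Submodule.subset_span (by simp)))
    (Submodule.smul_mem _ _ (Submodule.subset_span (by simp)))

theorem ker_aeval_ne_bot_of_dvd_minpoly [FiniteDimensional K V] (f : End K V) {q : K[X]}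
    (hq : q ∣ minpoly K f) (hq0 : 0 < q.natDegree) : LinearMap.ker (aeval f q) ≠ ⊥ := by
  obtain ⟨r, hr⟩ := hq
  intro hker
  have hunit : IsUnit (aeval f q) := (LinearMap.isUnit_iff_ker_eq_bot _).2 hker
  have hr_aeval : aeval f r = 0 := by
    have := minpoly.aeval K f
    rwa [hr, map_mul, hunit.mul_right_eq_zero] at this
  have hr0 : r ≠ 0 :=
    right_ne_zero_of_mul (hr ▸ minpoly.ne_zero (Algebra.IsIntegral.isIntegral f))
  have := natDegree_le_of_dvd (minpoly.dvd K f hr_aeval) hr0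
  rw [hr, natDegree_mul (ne_zero_of_natDegree_gt hq0) hr0] at this
  omega

end Module.End

end

theorem Real.exists_isRoot_of_odd_natDegree {p : ℝ[X]} (hp : Odd p.natDegree) :
    ∃ x, p.IsRoot x := by
  induction hn : p.natDegree using Nat.strong_induction_on generalizing p with
  | _ n ih =>
    have hp0 : p ≠ 0 := by rintro rfl; simp at hp
    obtain ⟨q, hq, r, rfl⟩ := WfDvdMonoid.exists_irreducible_factor
      (not_isUnit_of_natDegree_pos p hp.pos) hp0
    have hdeg : q.natDegree + r.natDegree = n := by
      rw [← hn, natDegree_mul hq.ne_zero (right_ne_zero_of_mul hp0)]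
    have := hq.natDegree_le_two
    by_cases hq1 : q.natDegree = 1
    · obtain ⟨x, hx⟩ :=
        exists_root_of_degree_eq_one ((degree_eq_iff_natDegree_eq_of_pos one_pos).2 hq1)
      exact ⟨x, root_mul_right_of_isRoot r hx⟩
    · have := hq.natDegree_pos
      obtain ⟨x, hx⟩ := ih r.natDegree (by omega) (p := r)
        (by rw [Nat.odd_iff] at hp ⊢; omega) rfl
      exact ⟨x, root_mul_left_of_isRoot q hx⟩

namespace Module.End

variable {V : Type*} [AddCommGroup V] [Module ℝ V] [FiniteDimensional ℝ V]

theorem exists_hasEigenvalue_of_odd_finrank (f : End ℝ V) (h : Odd (finrank ℝ V)) :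
    ∃ μ, f.HasEigenvalue μ := by
  obtain ⟨μ, hμ⟩ := Real.exists_isRoot_of_odd_natDegree (f.charpoly_natDegree ▸ h)
  exact ⟨μ, (hasEigenvalue_iff_isRoot_charpoly f μ).2 hμ⟩

theorem exists_mem_invtSubmodule_finrank_eq_one_of_odd_finrank (f : End ℝ V)
    (h : Odd (finrank ℝ V)) : ∃ L ∈ f.invtSubmodule, finrank ℝ L = 1 := by
  obtain ⟨μ, hμ⟩ := f.exists_hasEigenvalue_of_odd_finrank h
  obtain ⟨v, hv⟩ := hμ.exists_hasEigenvector
  exact ⟨_, span_singleton_mem_invtSubmodule hv, finrank_span_singleton hv.2⟩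

theorem exists_mem_invtSubmodule_finrank_add_one_of_odd_finrank (f : End ℝ V)
    (h : Odd (finrank ℝ V)) : ∃ H ∈ f.invtSubmodule, finrank ℝ H + 1 = finrank ℝ V := by
  obtain ⟨μ, hμ⟩ :=
    exists_hasEigenvalue_of_odd_finrank f.dualMap (by rwa [Subspace.dual_finrank_eq])
  obtain ⟨φ, hφ⟩ := hμ.exists_hasEigenvector
  exact ⟨_, ker_mem_invtSubmodule_of_dualMap_eq_smul hφ.apply_eq_smul,
    Module.Dual.finrank_ker_add_one_of_ne_zero hφ.2⟩

theorem exists_mem_invtSubmodule_finrank_eq_one_or_two [Nontrivial V] (f : End ℝ V) :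
    ∃ U ∈ f.invtSubmodule, finrank ℝ U = 1 ∨ finrank ℝ U = 2 := by
  obtain ⟨q, hq, hqf⟩ := WfDvdMonoid.exists_irreducible_factor (minpoly.not_isUnit ℝ f)
    (minpoly.ne_zero (Algebra.IsIntegral.isIntegral f))
  obtain ⟨v, hv, hv0⟩ :=
    (Submodule.ne_bot_iff _).1 (f.ker_aeval_ne_bot_of_dvd_minpoly hqf hq.natDegree_pos)
  have := hq.natDegree_le_two
  -- padding `q` with a power of `X` gives a polynomial of degree exactly 2 that still kills `v`
  have hdeg : (X ^ (2 - q.natDegree) * q).natDegree = 2 := by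
    rw [natDegree_mul (pow_ne_zero _ X_ne_zero) hq.ne_zero, natDegree_X_pow]
    omega
  have hpad : aeval f (X ^ (2 - q.natDegree) * q) v = 0 := by
    rw [map_mul, mul_apply, LinearMap.mem_ker.1 hv, map_zero]
  exact ⟨_, span_pair_mem_invtSubmodule (apply_apply_mem_span_pair_of_aeval_eq_zero hdeg hpad),
    finrank_span_pair_eq_one_or_two _ hv0⟩

theorem exists_mem_invtSubmodule_finrank_eq (f : End ℝ V) {d : ℕ} (hd : d ≤ finrank ℝ V)
    (hpar : Even d ∨ Odd (finrank ℝ V)) : ∃ W ∈ f.invtSubmodule, finrank ℝ W = d := by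
  induction hn : finrank ℝ V using Nat.strong_induction_on generalizing V d with
  | _ n ih =>
    rcases hd.eq_or_lt with rfl | hdn
    · exact ⟨⊤, invtSubmodule.top_mem f, finrank_top ℝ V⟩
    rcases d.eq_zero_or_pos with rfl | hd0
    · exact ⟨⊥, invtSubmodule.bot_mem f, finrank_bot ℝ V⟩
    rw [hn, Nat.even_iff, Nat.odd_iff] at hpar
    rcases Nat.even_or_odd n with hn_even | hn_odd
    · rw [Nat.even_iff] at hn_even
      have : Nontrivial V := Module.nontrivial_of_finrank_pos (R := ℝ) (by omega)
      obtain ⟨U, hU, hU12⟩ := f.exists_mem_invtSubmodule_finrank_eq_one_or_two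
      have hquot := U.finrank_quotient_add_finrank
      refine exists_finrank_eq_of_quotient hU (by omega) (ih _ (by omega) _ (by omega) ?_ rfl)
      rw [Nat.even_iff, Nat.odd_iff]
      omega
    rcases Nat.even_or_odd d with hd_even | hd_odd
    · obtain ⟨H, hH, hHn⟩ :=
        f.exists_mem_invtSubmodule_finrank_add_one_of_odd_finrank (hn ▸ hn_odd)
      exact exists_finrank_eq_of_restrict hH (ih _ (by omega) _ (by omega) (.inl hd_even) rfl)
    · obtain ⟨L, hL, hL1⟩ :=
        f.exists_mem_invtSubmodule_finrank_eq_one_of_odd_finrank (hn ▸ hn_odd)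
      have hquot := L.finrank_quotient_add_finrank
      rw [Nat.odd_iff] at hd_odd
      refine exists_finrank_eq_of_quotient hL (by omega)
        (ih _ (by omega) _ (by omega) (.inl (Nat.even_iff.2 (by omega))) rfl)

end Module.End

/-- An endomorphism of a real vector space of odd finite dimension `n` has invariant
subspaces of every dimension `d < n`. -/
theorem stmt10 (V : Type*) [AddCommGroup V] [Module ℝ V] [FiniteDimensional ℝ V]
    (hodd : Odd (Module.finrank ℝ V)) (f : V →ₗ[ℝ] V) :
    ∀ d : ℕ, d < Module.finrank ℝ V →
      ∃ W : Submodule ℝ V, (∀ x ∈ W, f x ∈ W) ∧ Module.finrank ℝ W = d :=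
  fun _ hd ↦ exists_mem_invtSubmodule_finrank_eq f hd.le (.inr hodd)
end

section
/- Let α : ℝ → ℝ be continuously differentiable with α(x) ≠ 0 for all x, let β, γ : ℝ → ℝ be continuous, and set δ(x) := β(x) − α′(x). Let θ : ℝ → ℝ be twice differentiable and satisfy the reduced dynamics α(θ(t))·θ″(t) + β(θ(t))·θ′(t)² + γ(θ(t)) = 0 for all t. Set θ₀ := θ(0) and θ̇₀ := θ′(0), define ψ(a, b) := exp(−2·∫ₐᵇ δ(u)/α(u) du), and define I(t) := (1/2)·α(θ(t))²·θ′(t)² − ψ(θ₀, θ(t))·[(1/2)·α(θ₀)²·θ̇₀² − ∫_{θ₀}^{θ(t)} ψ(u, θ₀)·α(u)·γ(u) du]. Then I(t) = 0 for all t; that is, I is a first integral that vanishes identically along every solution of the reduced dynamics starting from (θ₀, θ̇₀). -/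
open intervalIntegral

/-- The integrating factor `ψ(a,b) = exp(−2·∫ₐᵇ δ(u)/α(u) du)` with `δ = β − α′`. -/
noncomputable def psiFactor (α β : ℝ → ℝ) (a b : ℝ) : ℝ :=
  Real.exp (-2 * ∫ u in a..b, (β u - deriv α u) / α u)

/-- The first-integral function `I` associated with the reduced dynamics
`α(θ)θ̈ + β(θ)θ̇² + γ(θ) = 0`. -/
noncomputable def firstIntegral (α β γ θ : ℝ → ℝ) (θ₀ θd₀ : ℝ) (t : ℝ) : ℝ :=
  (1 / 2) * α (θ t) ^ 2 * deriv θ t ^ 2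
    - psiFactor α β θ₀ (θ t) *
      ((1 / 2) * α θ₀ ^ 2 * θd₀ ^ 2 - ∫ u in θ₀..θ t, psiFactor α β u θ₀ * α u * γ u)

/-!
Along any trajectory the weighted energy
`E = ψ(θ, θ₀) · ½ α(θ)² θ̇² + ∫_{θ₀}^{θ} ψ(u, θ₀) α(u) γ(u) du` has derivative
`ψ(θ, θ₀) · α(θ) · θ̇ · (α(θ) θ̈ + β(θ) θ̇² + γ(θ))`: the identity
`∂ₓ ψ(x, θ₀) = 2 (δ(x) / α(x)) ψ(x, θ₀)` trades the `α′ θ̇³` coming from `α(θ)²` for `β θ̇³`.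
So `E` is conserved along solutions, and since `ψ(θ₀, x) ψ(x, θ₀) = 1`,
`I(t) = ψ(θ₀, θ(t)) · (E(t) − E(0)) = 0`.
-/

noncomputable def weightedEnergy (α β γ θ : ℝ → ℝ) (θ₀ t : ℝ) : ℝ :=
  psiFactor α β (θ t) θ₀ * ((1 / 2) * α (θ t) ^ 2 * deriv θ t ^ 2)
    + ∫ u in θ₀..θ t, psiFactor α β u θ₀ * α u * γ u

section

variable {α β : ℝ → ℝ}

theorem psiFactor_mul_psiFactor_swap (a b : ℝ) :
    psiFactor α β a b * psiFactor α β b a = 1 := by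
  rw [psiFactor, psiFactor, ← Real.exp_add, integral_symm b a, ← Real.exp_zero]
  congr 1
  ring

theorem psiFactor_self (a : ℝ) : psiFactor α β a a = 1 := by
  simp [psiFactor]

theorem hasDerivAt_psiFactor_left (hδ : Continuous fun u => (β u - deriv α u) / α u)
    (b x : ℝ) :
    HasDerivAt (fun x => psiFactor α β x b)
      (psiFactor α β x b * (2 * ((β x - deriv α x) / α x))) x := by
  have hint := integral_hasDerivAt_left (hδ.intervalIntegrable x b)
    hδ.aestronglyMeasurable.stronglyMeasurableAtFilter hδ.continuousAt
  refine (hint.const_mul (-2)).exp.congr_deriv ?_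
  rw [psiFactor]
  ring

theorem continuous_psiFactor_left (hδ : Continuous fun u => (β u - deriv α u) / α u) (b : ℝ) :
    Continuous fun x => psiFactor α β x b :=
  continuous_iff_continuousAt.2 fun x => (hasDerivAt_psiFactor_left hδ b x).continuousAt

end

theorem firstIntegral_eq_psiFactor_mul (α β γ θ : ℝ → ℝ) (θ₀ θd₀ t : ℝ) :
    firstIntegral α β γ θ θ₀ θd₀ t
      = psiFactor α β θ₀ (θ t) * (weightedEnergy α β γ θ θ₀ t - (1 / 2) * α θ₀ ^ 2 * θd₀ ^ 2) := by
  rw [firstIntegral, weightedEnergy]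
  linear_combination (-(1 / 2) * α (θ t) ^ 2 * deriv θ t ^ 2) *
    psiFactor_mul_psiFactor_swap (α := α) (β := β) θ₀ (θ t)

theorem weightedEnergy_zero (α β γ θ : ℝ → ℝ) :
    weightedEnergy α β γ θ (θ 0) 0 = (1 / 2) * α (θ 0) ^ 2 * deriv θ 0 ^ 2 := by
  simp [weightedEnergy, psiFactor_self]

theorem hasDerivAt_weightedEnergy {α β γ θ : ℝ → ℝ} (θ₀ : ℝ) {t : ℝ}
    (hα : ContDiff ℝ 1 α) (hα0 : ∀ x, α x ≠ 0) (hβ : Continuous β) (hγ : Continuous γ)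
    (hθ : DifferentiableAt ℝ θ t) (hθ' : DifferentiableAt ℝ (deriv θ) t)
    (hode : α (θ t) * deriv (deriv θ) t + β (θ t) * deriv θ t ^ 2 + γ (θ t) = 0) :
    HasDerivAt (weightedEnergy α β γ θ θ₀) 0 t := by
  have hδ : Continuous fun u => (β u - deriv α u) / α u :=
    (hβ.sub (hα.continuous_deriv le_rfl)).div hα.continuous hα0
  have hg : Continuous fun u => psiFactor α β u θ₀ * α u * γ u :=
    ((continuous_psiFactor_left hδ θ₀).mul hα.continuous).mul hγ
  have hθt := hθ.hasDerivAt
  have hψ := (hasDerivAt_psiFactor_left hδ θ₀ (θ t)).comp t hθt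
  have hαθ := (hα.differentiable one_ne_zero (θ t)).hasDerivAt.comp t hθt
  have hkin := ((hαθ.pow 2).const_mul (1 / 2 : ℝ)).mul (hθ'.hasDerivAt.pow 2)
  have hpot := (integral_hasDerivAt_right (hg.intervalIntegrable θ₀ (θ t))
    hg.aestronglyMeasurable.stronglyMeasurableAtFilter hg.continuousAt).comp t hθt
  refine ((hψ.mul hkin).add hpot).congr_deriv ?_
  simp only [Function.comp_apply, Pi.mul_apply, Pi.pow_apply]
  field_simp
  linear_combination
    (2 * psiFactor α β (θ t) θ₀ * α (θ t) * deriv θ t) * hode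

/-- The first integral `I` vanishes identically along every solution of the reduced
dynamics `α(θ)θ̈ + β(θ)θ̇² + γ(θ) = 0` starting from `(θ(0), θ′(0))`. -/
theorem stmt12 (α β γ θ : ℝ → ℝ)
    (hα : ContDiff ℝ 1 α) (hα0 : ∀ x, α x ≠ 0)
    (hβ : Continuous β) (hγ : Continuous γ)
    (hθ : Differentiable ℝ θ) (hθ' : Differentiable ℝ (deriv θ))
    (hode : ∀ t, α (θ t) * deriv (deriv θ) t + β (θ t) * deriv θ t ^ 2 + γ (θ t) = 0) :
    ∀ t, firstIntegral α β γ θ (θ 0) (deriv θ 0) t = 0 := by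
  intro t
  have hE : ∀ s, HasDerivAt (weightedEnergy α β γ θ (θ 0)) 0 s := fun s =>
    hasDerivAt_weightedEnergy (θ 0) hα hα0 hβ hγ (hθ s) (hθ' s) (hode s)
  have hconst : weightedEnergy α β γ θ (θ 0) t = weightedEnergy α β γ θ (θ 0) 0 :=
    is_const_of_deriv_eq_zero (fun s => (hE s).differentiableAt) (fun s => (hE s).deriv) t 0
  rw [firstIntegral_eq_psiFactor_mul, hconst, weightedEnergy_zero, sub_self, mul_zero]
end
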